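/- Let n ≥ 1 and let s = (s_1, ..., s_n) be a sequence of positive integers. If s is graphic and s_1 + s_2 + ... + s_n ≥ 2(n-1), then s is connected and graphic, i.e., s is the degree sequence of some connected simple graph on n vertices. -/

import Mathlib

/-!
Among all realizations of `s`, take one whose reachability relation is maximal. If it were
disconnected, it would have at least `n - 1` edges but at least two components, so it could not be
a forest: some edge `ab` lies on a cycle. Pick `c` outside the component of `a` and a neighbour `d`
of `c` (degrees are positive). The 2-switch replacing `ab, cd` by `ac, bd` keeps all degrees,
keeps `a` and `b` connected through the rest of the cycle, and joins the two components, so it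
strictly enlarges reachability: a contradiction.
-/

open SimpleGraph Finset

/-- A sequence `s` of length `n` is graphic if it is the degree sequence of a
finite simple graph on `n` vertices. -/
def Graphic (n : ℕ) (s : Fin n → ℕ) : Prop :=
  ∃ G : SimpleGraph (Fin n), ∃ _ : DecidableRel G.Adj, ∀ i, G.degree i = s i

/-- A sequence `s` is connected and graphic if it is the degree sequence of a
connected finite simple graph on `n` vertices. -/
def ConnectedGraphic (n : ℕ) (s : Fin n → ℕ) : Prop :=
  ∃ G : SimpleGraph (Fin n), ∃ _ : DecidableRel G.Adj,
    G.Connected ∧ ∀ i, G.degree i = s i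

namespace SimpleGraph

variable {V : Type*} {G H : SimpleGraph V} {a b c d : V}

lemma degree_eq_ncard_neighborSet [Fintype V] [DecidableRel G.Adj] (v : V) :
    G.degree v = (G.neighborSet v).ncard := by
  rw [← card_neighborSet_eq_degree, ← Nat.card_coe_set_eq, Nat.card_eq_fintype_card]

lemma ncard_neighborSet_sup [Finite V] (h : Disjoint G H) (v : V) :
    ((G ⊔ H).neighborSet v).ncard = (G.neighborSet v).ncard + (H.neighborSet v).ncard := by
  refine neighborSet_sup v ▸ Set.ncard_union_eq (Set.disjoint_left.2 fun w hG hH => ?_)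
  exact h.le_bot (show (G ⊓ H).Adj v w from ⟨hG, hH⟩)

lemma ncard_neighborSet_edge [Finite V] [DecidableEq V] (hab : a ≠ b) (v : V) :
    ((edge a b).neighborSet v).ncard = if v = a ∨ v = b then 1 else 0 := by
  split_ifs with hv
  · rcases hv with rfl | rfl
    · exact Set.ncard_eq_one.2 ⟨b, by ext; simp only [mem_neighborSet, edge_adj]; grind⟩
    · exact Set.ncard_eq_one.2 ⟨a, by ext; simp only [mem_neighborSet, edge_adj]; grind⟩
  · exact (Set.ncard_eq_zero (Set.toFinite _)).2 <| Set.eq_empty_of_forall_notMem fun w hw => by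
      simp only [mem_neighborSet, edge_adj] at hw
      grind

lemma reachable_le_of_adj_le (h : G.Adj ≤ H.Reachable) : G.Reachable ≤ H.Reachable := by
  rintro x y ⟨p⟩
  induction p with
  | nil => rfl
  | cons hadj _ ih => exact (h _ _ hadj).trans ih

lemma reachable_of_edge_le (h : edge a b ≤ G) : G.Reachable a b :=
  ((edge_le_iff G).1 h).elim (fun e => e ▸ .refl a) Adj.reachable

lemma Reachable.sdiff_edge_of_not_reachable (h : G.Reachable a b) (hac : ¬G.Reachable a c) :
    (G \ edge c d).Reachable a b := by
  classical
  obtain ⟨p⟩ := h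
  have hc : c ∉ p.support := fun hc => hac ⟨p.takeUntil c hc⟩
  exact ⟨p.toDeleteEdge s(c, d) fun he => hc (p.fst_mem_support_of_mem_edges he)⟩

/-- Adding an edge between two components keeps a forest acyclic, and the result extends to a
spanning tree with `card V - 1` edges. -/
lemma IsAcyclic.card_edgeFinset_add_two_le [Fintype V] [DecidableEq V] [DecidableRel G.Adj]
    (hG : G.IsAcyclic) (hab : ¬G.Reachable a b) :
    #G.edgeFinset + 2 ≤ Fintype.card V := by
  have : Nonempty V := ⟨a⟩
  obtain ⟨T, hle, -, hT⟩ := connected_top.exists_isTree_le_of_le_of_isAcyclic le_top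
    (hG.sup_edge_of_not_reachable hab)
  classical
  have h_sup := G.card_edgeFinset_sup_edge (mt Adj.reachable hab) fun e => hab (e ▸ .refl a)
  have h_le := card_le_card (edgeFinset_subset_edgeFinset.2 hle)
  have h_tree := hT.card_edgeFinset
  omega

lemma exists_adj_reachable_sdiff_edge [Fintype V] [DecidableEq V] [DecidableRel G.Adj]
    (hcard : Fintype.card V ≤ #G.edgeFinset + 1) {u v : V} (huv : ¬G.Reachable u v) :
    ∃ a b, G.Adj a b ∧ (G \ edge a b).Reachable a b := by
  by_contra! h
  have hG : G.IsAcyclic :=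
    isAcyclic_iff_forall_adj_isBridge.2 fun a b hab => isBridge_iff.2 (h a b hab)
  have := hG.card_edgeFinset_add_two_le huv
  omega

def twoSwitch (G : SimpleGraph V) (a b c d : V) : SimpleGraph V :=
  G \ (edge a b ⊔ edge c d) ⊔ (edge a c ⊔ edge b d)

/-- `G` and its 2-switch differ by exchanging the matchings `{ab, cd}` and `{ac, bd}`, which cover
the same vertices. -/
lemma ncard_neighborSet_twoSwitch [Finite V] (hab : G.Adj a b) (hcd : G.Adj c d)
    (hac : ¬G.Adj a c) (hbd : ¬G.Adj b d) (hac' : a ≠ c) (had : a ≠ d) (hbc : b ≠ c)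
    (hbd' : b ≠ d) (v : V) :
    ((G.twoSwitch a b c d).neighborSet v).ncard = (G.neighborSet v).ncard := by
  classical
  have hab' := hab.ne
  have hcd' := hcd.ne
  have hle : edge a b ⊔ edge c d ≤ G :=
    sup_le ((edge_le_iff G).2 (.inr hab)) ((edge_le_iff G).2 (.inr hcd))
  have hdisj : Disjoint G (edge a c ⊔ edge b d) :=
    disjoint_sup_right.2 ⟨(disjoint_edge G).2 hac, (disjoint_edge G).2 hbd⟩
  conv_rhs => rw [← sdiff_sup_cancel hle]
  rw [twoSwitch, ncard_neighborSet_sup (hdisj.mono_left sdiff_le),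
    ncard_neighborSet_sup disjoint_sdiff_self_left,
    ncard_neighborSet_sup ((disjoint_edge _).2 ?ac_bd),
    ncard_neighborSet_sup ((disjoint_edge _).2 ?ab_cd),
    ncard_neighborSet_edge hab', ncard_neighborSet_edge hcd',
    ncard_neighborSet_edge hac', ncard_neighborSet_edge hbd']
  case ac_bd | ab_cd => simp only [edge_adj]; grind
  congr 1
  split_ifs <;> grind

lemma ncard_neighborSet_twoSwitch_of_not_reachable [Finite V] (hab : G.Adj a b)
    (hcd : G.Adj c d) (hac : ¬G.Reachable a c) (v : V) :
    ((G.twoSwitch a b c d).neighborSet v).ncard = (G.neighborSet v).ncard := by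
  have hbc : ¬G.Reachable b c := fun h => hac (hab.reachable.trans h)
  have had : ¬G.Reachable a d := fun h => hac (h.trans hcd.reachable.symm)
  have hbd : ¬G.Reachable b d := fun h => hbc (h.trans hcd.reachable.symm)
  have ne_of {x y : V} (h : ¬G.Reachable x y) : x ≠ y := fun e => h (e ▸ .refl x)
  exact ncard_neighborSet_twoSwitch hab hcd (mt Adj.reachable hac) (mt Adj.reachable hbd)
    (ne_of hac) (ne_of had) (ne_of hbc) (ne_of hbd) v

lemma reachable_le_reachable_twoSwitch (hab : (G \ edge a b).Reachable a b)
    (hac : ¬G.Reachable a c) : G.Reachable ≤ (G.twoSwitch a b c d).Reachable := by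
  have hle : G \ (edge a b ⊔ edge c d) ≤ G.twoSwitch a b c d := le_sup_left
  have hab₂ : (G.twoSwitch a b c d).Reachable a b := by
    have := hab.sdiff_edge_of_not_reachable (d := d) fun h => hac (h.mono sdiff_le)
    rw [sdiff_sdiff_left] at this
    exact this.mono hle
  have hcd₂ : (G.twoSwitch a b c d).Reachable c d :=
    (reachable_of_edge_le (le_sup_left.trans le_sup_right)).symm.trans
      (hab₂.trans (reachable_of_edge_le (le_sup_right.trans le_sup_right)))
  refine reachable_le_of_adj_le fun u w huw => ?_
  by_cases he : (edge a b ⊔ edge c d).Adj u w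
  · simp only [sup_adj, edge_adj] at he
    grind [Reachable.symm]
  · exact (hle ⟨huw, he⟩).reachable

lemma reachable_lt_reachable_twoSwitch (hab : (G \ edge a b).Reachable a b)
    (hac : ¬G.Reachable a c) : G.Reachable < (G.twoSwitch a b c d).Reachable :=
  lt_of_le_not_ge (reachable_le_reachable_twoSwitch hab hac) fun h =>
    hac (h a c (reachable_of_edge_le (le_sup_left.trans le_sup_right)))

end SimpleGraph

theorem graphic_sum_ge_connected (n : ℕ) (hn : 1 ≤ n) (s : Fin n → ℕ)
    (hpos : ∀ i, 0 < s i) (hgraphic : Graphic n s)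
    (hsum : 2 * (n - 1) ≤ ∑ i, s i) :
    ConnectedGraphic n s := by
  classical
  obtain ⟨G₀, _, hG₀⟩ := hgraphic
  obtain ⟨G, hGs, hGmax⟩ := Set.Finite.exists_maximalFor Reachable
    {G : SimpleGraph (Fin n) | ∀ i, (G.neighborSet i).ncard = s i} (Set.toFinite _)
    ⟨G₀, fun i => (degree_eq_ncard_neighborSet i).symm.trans (hG₀ i)⟩
  have hdeg (i : Fin n) : G.degree i = s i := (degree_eq_ncard_neighborSet i).trans (hGs i)
  have hcard : Fintype.card (Fin n) ≤ #G.edgeFinset + 1 := by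
    have := G.sum_degrees_eq_twice_card_edges
    simp only [hdeg, Fintype.card_fin] at this ⊢
    omega
  have hne : Nonempty (Fin n) := ⟨⟨0, hn⟩⟩
  refine ⟨G, inferInstance, (connected_iff G).2 ⟨fun u v => ?_, hne⟩, hdeg⟩
  by_contra huv
  obtain ⟨a, b, hab, hab_cycle⟩ := exists_adj_reachable_sdiff_edge hcard huv
  obtain ⟨c, hac⟩ : ∃ c, ¬G.Reachable a c := by
    by_contra! h
    exact huv ((h u).symm.trans (h v))
  obtain ⟨d, hcd⟩ : ∃ d, G.Adj c d :=
    Set.nonempty_of_ncard_ne_zero ((hGs c).trans_ne (hpos c).ne')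
  have hlt := reachable_lt_reachable_twoSwitch (d := d) hab_cycle hac
  exact hlt.not_ge <| hGmax
    (fun i => (ncard_neighborSet_twoSwitch_of_not_reachable hab hcd hac i).trans (hGs i)) hlt.le
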